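/- arXiv:2405.18678 — 2 statements merged into one kernel-verified Lean document; each statement's English description precedes it below -/
import Mathlib

section
/- Let G be a finite group and p a prime with ε_p(G) = m. Then the derived length of a Sylow p-subgroup of G/Z(G) is at most m. -/
/-- `εₚ(G)`: the largest `p`-exponent of a conjugacy class size
(equivalently, of the index of a centralizer) in `G`. -/
noncomputable def epsP (p : ℕ) (G : Type*) [Group G] : ℕ :=
  sSup {k | ∃ x : G, ((Subgroup.centralizer {x}).index).factorization p = k}

/-!
Fix `g ∈ G`. A Sylow `p`-subgroup of `C_G(g)` lies in a Sylow `p`-subgroup `R` of `G` with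
index `|G : C_G(g)|_p ∣ p ^ m`. In a finite `p`-group a subgroup of index `p ^ k` contains the
`k`-th derived subgroup: climb to the whole group by steps of index `p`, each normal with abelian
quotient. Hence `R⁽ᵐ⁾ ≤ C_G(g)`, i.e. for a fixed Sylow subgroup `P`, every element of `G` is
conjugate into the centralizer of `P⁽ᵐ⁾`. A finite group is not the union of the conjugates of a
proper subgroup, so `P⁽ᵐ⁾ ≤ Z(G)`, and the image of `P` in `G ⧸ Z(G)`, which can be any Sylow
subgroup there, has trivial `m`-th derived subgroup.
-/

namespace Subgroup

variable {G G' : Type*} [Group G] [Group G']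

def iteratedCommutator (H : Subgroup G) : ℕ → Subgroup G
  | 0 => H
  | n + 1 => ⁅H.iteratedCommutator n, H.iteratedCommutator n⁆

theorem iteratedCommutator_antitone (H : Subgroup G) : Antitone H.iteratedCommutator :=
  antitone_nat_of_succ_le fun n => commutator_le_self (H.iteratedCommutator n)

theorem map_iteratedCommutator (f : G →* G') (H : Subgroup G) (n : ℕ) :
    (H.map f).iteratedCommutator n = (H.iteratedCommutator n).map f := by
  induction n with
  | zero => rfl
  | succ n ih => simp only [iteratedCommutator, ih, map_commutator]

theorem map_subtype_derivedSeries (H : Subgroup G) (n : ℕ) :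
    (derivedSeries H n).map H.subtype = H.iteratedCommutator n := by
  induction n with
  | zero => simp [iteratedCommutator, ← MonoidHom.range_eq_map]
  | succ n ih => rw [derivedSeries_succ, map_commutator, ih]; rfl

theorem commutator_le_of_relIndex_eq_minFac {H K : Subgroup G}
    (h : H.relIndex K = (Nat.card K).minFac) : ⁅K, K⁆ ≤ H := by
  rcases eq_or_ne (Nat.card K) 1 with hK | hK
  · rw [card_eq_one.mp hK, commutator_bot_left]
    exact bot_le
  have : Fact (Nat.card K).minFac.Prime := ⟨Nat.minFac_prime hK⟩
  have : (H.subgroupOf K).Normal := normal_of_index_eq_minFac_card h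
  have : IsCyclic (K ⧸ H.subgroupOf K) := isCyclic_of_prime_card h
  have hcomm : _root_.commutator K ≤ H.subgroupOf K :=
    Normal.quotient_commutative_iff_commutator_le.mp inferInstance
  rw [← map_subtype_commutator]
  exact (map_mono hcomm).trans ((subgroupOf_map_subtype H K).trans_le inf_le_left)

end Subgroup

namespace IsPGroup

variable {p : ℕ} [hp : Fact p.Prime] {G : Type*} [Group G] [Finite G]

theorem commutator_le_of_relIndex_eq_prime {H K : Subgroup G} (hK : IsPGroup p K)
    (h : H.relIndex K = p) : ⁅K, K⁆ ≤ H := by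
  obtain ⟨n, hn⟩ := IsPGroup.iff_card.mp hK
  have hn0 : n ≠ 0 := by
    rintro rfl
    have hdvd : H.relIndex K ∣ p ^ 0 := hn ▸ H.relIndex_dvd_card K
    rw [h, pow_zero, Nat.dvd_one] at hdvd
    exact hp.out.ne_one hdvd
  exact Subgroup.commutator_le_of_relIndex_eq_minFac (by rw [h, hn, hp.out.pow_minFac hn0])

theorem exists_le_relIndex_eq_prime (hG : IsPGroup p G) {H : Subgroup G} (hH : H ≠ ⊤) :
    ∃ K : Subgroup G, H ≤ K ∧ H.relIndex K = p := by
  obtain ⟨n, hn⟩ := IsPGroup.iff_card.mp (hG.to_subgroup H)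
  obtain ⟨i, hi⟩ := hG.index H
  have hi0 : i ≠ 0 := by
    rintro rfl
    exact hH (Subgroup.index_eq_one.mp hi)
  have hdvd : p ^ (n + 1) ∣ Nat.card G := by
    rw [← H.card_mul_index, hn, hi, ← pow_add]
    exact pow_dvd_pow p (by omega)
  obtain ⟨K, hK, hHK⟩ := Sylow.exists_subgroup_card_pow_succ hdvd hn
  refine ⟨K, hHK, ?_⟩
  have hcard : Nat.card H * H.relIndex K = Nat.card K := by
    simpa only [Subgroup.relIndex_bot_left] using Subgroup.relIndex_mul_relIndex _ _ _ bot_le hHK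
  rw [hn, hK, pow_succ] at hcard
  exact Nat.eq_of_mul_eq_mul_left (pow_pos hp.out.pos n) hcard

theorem derivedSeries_le_of_index_dvd (hG : IsPGroup p G) {H : Subgroup G} {k : ℕ}
    (hH : H.index ∣ p ^ k) : derivedSeries G k ≤ H := by
  induction k generalizing H with
  | zero => simp [Subgroup.index_eq_one.mp (Nat.dvd_one.mp hH)]
  | succ k ih =>
    rcases eq_or_ne H ⊤ with rfl | hH'
    · exact le_top
    obtain ⟨K, hHK, hrel⟩ := hG.exists_le_relIndex_eq_prime hH'
    have hK : K.index ∣ p ^ k := by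
      rw [← Subgroup.relIndex_mul_index hHK, hrel, pow_succ'] at hH
      exact Nat.dvd_of_mul_dvd_mul_left hp.out.pos hH
    rw [derivedSeries_succ]
    exact (Subgroup.commutator_mono (ih hK) (ih hK)).trans
      (commutator_le_of_relIndex_eq_prime (hG.to_subgroup K) hrel)

end IsPGroup

open MulAction Finset in
theorem MulAction.subsingleton_of_forall_fixedBy_nonempty {G X : Type*} [Group G] [Finite G]
    [MulAction G X] [Finite X] [IsPretransitive G X] (h : ∀ g : G, (fixedBy X g).Nonempty) :
    Subsingleton X := by
  classical
  cases nonempty_fintype G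
  cases nonempty_fintype X
  have : Nonempty X := (h 1).to_subtype.map Subtype.val
  have : Unique (orbitRel.Quotient G X) :=
    (pretransitive_iff_unique_quotient_of_nonempty G X).mp inferInstance |>.some
  set f : G → ℕ := fun g => Fintype.card (fixedBy X g)
  have hf : ∀ g, 1 ≤ f g := fun g => Fintype.card_pos_iff.mpr (h g).to_subtype
  -- Burnside: the fixed-point counts sum to `|G|` times the number of orbits, which is one.
  have hcount : f 1 + (Fintype.card G - 1) ≤ Fintype.card G :=
    calc f 1 + (Fintype.card G - 1)
        ≤ f 1 + ∑ g ∈ univ.erase 1, f g := by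
          gcongr
          simpa using card_nsmul_le_sum (univ.erase 1) f 1 fun g _ => hf g
      _ = ∑ g, f g := add_sum_erase _ _ (mem_univ 1)
      _ = Fintype.card G := by
          rw [sum_card_fixedBy_eq_card_orbits_mul_card_group, Fintype.card_unique, one_mul]
  have hX : f 1 = Fintype.card X := by simp [f]
  rw [← Fintype.card_le_one_iff_subsingleton]
  have := Fintype.card_pos (α := G)
  omega

theorem Subgroup.eq_top_of_forall_exists_conj_mem {G : Type*} [Group G] [Finite G]
    (K : Subgroup G) (h : ∀ g : G, ∃ x : G, x⁻¹ * g * x ∈ K) : K = ⊤ := by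
  refine QuotientGroup.subgroup_eq_top_of_subsingleton K
    (MulAction.subsingleton_of_forall_fixedBy_nonempty (G := G) fun g => ?_)
  obtain ⟨x, hx⟩ := h g
  refine ⟨(x : G ⧸ K), ?_⟩
  rw [MulAction.mem_fixedBy, MulAction.Quotient.smul_coe, QuotientGroup.eq, ← inv_mem_iff]
  simpa [mul_assoc] using hx

theorem factorization_index_centralizer_le_epsP {G : Type*} [Group G] [Finite G] (p : ℕ)
    (g : G) : (Subgroup.centralizer {g}).index.factorization p ≤ epsP p G := by
  refine le_csSup ⟨(Nat.card G).factorization p, ?_⟩ ⟨g, rfl⟩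
  rintro _ ⟨x, rfl⟩
  exact (Nat.factorization_le_iff_dvd Subgroup.index_ne_zero_of_finite Nat.card_pos.ne').mpr
    (Subgroup.index_dvd_card _) p

namespace Sylow

variable {p : ℕ} [hp : Fact p.Prime] {G : Type*} [Group G] [Finite G]

open Subgroup

theorem exists_iteratedCommutator_le (C : Subgroup G) :
    ∃ R : Sylow p G, (R : Subgroup G).iteratedCommutator (C.index.factorization p) ≤ C := by
  obtain ⟨S⟩ : Nonempty (Sylow p C) := inferInstance
  set S' := (S : Subgroup C).map C.subtype
  obtain ⟨R, hSR⟩ := (S.isPGroup'.map C.subtype).exists_le_sylow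
  refine ⟨R, ?_⟩
  have hindex : (S'.subgroupOf R).index ∣ p ^ C.index.factorization p := by
    obtain ⟨n, hn⟩ := R.isPGroup'.index (S'.subgroupOf R)
    have hprod : p ^ n * (R : Subgroup G).index = (S : Subgroup C).index * C.index := by
      rw [← hn]
      exact (relIndex_mul_index hSR).trans (index_map_subtype _)
    have hcop : (p ^ n).Coprime (S : Subgroup C).index :=
      ((Nat.Prime.coprime_iff_not_dvd hp.out).mpr S.not_dvd_index).pow_left n
    have hdvd : p ^ n ∣ C.index := hcop.dvd_mul_left.mp (Dvd.intro _ hprod)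
    rw [hn]
    exact (hp.out.pow_dvd_iff_dvd_ordProj index_ne_zero_of_finite).mp hdvd
  calc (R : Subgroup G).iteratedCommutator (C.index.factorization p)
      = (derivedSeries R (C.index.factorization p)).map (R : Subgroup G).subtype :=
        (map_subtype_derivedSeries _ _).symm
    _ ≤ (S'.subgroupOf R).map (R : Subgroup G).subtype :=
        map_mono (R.isPGroup'.derivedSeries_le_of_index_dvd hindex)
    _ = S' ⊓ R := subgroupOf_map_subtype _ _
    _ ≤ C := inf_le_left.trans (map_subtype_le _)

theorem exists_conj_mem_centralizer_iteratedCommutator (P : Sylow p G) {g : G} {m : ℕ}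
    (hg : (centralizer {g}).index.factorization p ≤ m) :
    ∃ x : G, x⁻¹ * g * x ∈ centralizer ((P : Subgroup G).iteratedCommutator m) := by
  obtain ⟨R, hR⟩ := exists_iteratedCommutator_le (p := p) (centralizer {g})
  obtain ⟨x, rfl⟩ := MulAction.exists_smul_eq G P R
  have hconj : ((x • P : Sylow p G) : Subgroup G).iteratedCommutator m =
      ((P : Subgroup G).iteratedCommutator m).map (MulAut.conj x).toMonoidHom :=
    map_iteratedCommutator _ _ _
  refine ⟨x, mem_centralizer_iff.mpr fun d hd => ?_⟩
  have hxd : x * d * x⁻¹ ∈ centralizer {g} :=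
    (hconj ▸ (iteratedCommutator_antitone _ hg).trans hR) (mem_map_of_mem _ hd)
  have hcomm : g * (x * d * x⁻¹) = x * d * x⁻¹ * g :=
    mem_centralizer_iff.mp hxd g rfl
  calc d * (x⁻¹ * g * x) = x⁻¹ * (x * d * x⁻¹ * g) * x := by group
    _ = x⁻¹ * g * x * d := by rw [← hcomm]; group

theorem iteratedCommutator_epsP_le_center (P : Sylow p G) :
    (P : Subgroup G).iteratedCommutator (epsP p G) ≤ center G :=
  centralizer_eq_top_iff_subset.mp <| eq_top_of_forall_exists_conj_mem _ fun _ =>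
    P.exists_conj_mem_centralizer_iteratedCommutator (factorization_index_centralizer_le_epsP p _)

end Sylow

theorem derivedSeries_sylow_quotient_center_eq_bot {G : Type*} [Group G] [Finite G]
    (p : ℕ) [Fact p.Prime] (m : ℕ) (hm : epsP p G = m)
    (Q : Sylow p (G ⧸ Subgroup.center G)) :
    derivedSeries (Q : Subgroup (G ⧸ Subgroup.center G)) m = ⊥ := by
  subst hm
  obtain ⟨P, rfl⟩ := Sylow.mapSurjective_surjective (QuotientGroup.mk'_surjective _) p Q
  rw [← Subgroup.map_eq_bot_iff_of_injective _ (Subgroup.subtype_injective _),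
    Subgroup.map_subtype_derivedSeries, Sylow.coe_mapSurjective, Subgroup.map_iteratedCommutator,
    Subgroup.map_eq_bot_iff, QuotientGroup.ker_mk']
  exact P.iteratedCommutator_epsP_le_center
end

section
/- Let G be a finite π-separable group with O_{π'}(G) = 1 and O_π(G) ≠ G. Then ε_π(G) ≥ ε_π(G/O_π(G)) + 1. -/
/-- `n` is a `π`-number: every prime divisor of `n` lies in `π`. -/
def IsPiNumber (π : Finset ℕ) (n : ℕ) : Prop := ∀ p : ℕ, p.Prime → p ∣ n → p ∈ π

/-- `n` is a `π'`-number: no prime divisor of `n` lies in `π`. -/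
def IsPiPrimeNumber (π : Finset ℕ) (n : ℕ) : Prop := ∀ p : ℕ, p.Prime → p ∣ n → p ∉ π

/-- The `π`-exponent of `n`: the sum of the exponents of the primes of `π`
in the factorization of `n` (so `p₁^{k₁}⋯p_s^{k_s}` is the `π`-part of `n`
and the `π`-exponent is `k₁ + ⋯ + k_s`). -/
def piExp (π : Finset ℕ) (n : ℕ) : ℕ :=
  ∑ p ∈ n.primeFactors.filter (· ∈ π), n.factorization p

/-- `ε_π(G)`: the largest `π`-exponent of a conjugacy class size in `G`. -/
noncomputable def epsPi (π : Finset ℕ) (G : Type*) [Group G] : ℕ :=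
  sSup {k | ∃ x : G, piExp π (Subgroup.centralizer {x}).index = k}

/-- A group is `π`-separable if it has a normal series each of whose factors
is a `π`-group or a `π'`-group. -/
def PiSeparable (π : Finset ℕ) (G : Type*) [Group G] : Prop :=
  ∃ (n : ℕ) (H : ℕ → Subgroup G), H 0 = ⊥ ∧ H n = ⊤ ∧
    (∀ i, H i ≤ H (i + 1)) ∧ (∀ i, (H i).Normal) ∧
    ∀ i < n,
      IsPiNumber π (Nat.card (↥(H (i + 1)) ⧸ (H i).subgroupOf (H (i + 1)))) ∨
      IsPiPrimeNumber π (Nat.card (↥(H (i + 1)) ⧸ (H i).subgroupOf (H (i + 1))))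


/-! By the Hall–Higman lemma `C_G(P) ≤ P`, so no `x ∉ P` centralizes `P`. For such `x`,
`|G : C_G(x)| = |C_G(x)P : C_G(x)| · |G : C_G(x)P|`; the first factor is `|P : C_P(x)|`,
a nontrivial `π`-number, and the second is a multiple of the class size of `xP` in `G / P`.
Applying this to a lift `x ∉ P` of an element realizing `ε_π(G / P)` (any `x ∉ P` if the
maximum is attained at `1`) gives the claim. -/

lemma piExp_eq_sum (π : Finset ℕ) (n : ℕ) : piExp π n = ∑ p ∈ π, n.factorization p := by
  rw [piExp, Finset.filter_mem_eq_inter, Finset.inter_comm, ← Finset.filter_mem_eq_inter]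
  exact Finset.sum_filter_of_ne fun p _ h =>
    Nat.support_factorization n ▸ Finsupp.mem_support_iff.mpr h

lemma piExp_mul (π : Finset ℕ) {a b : ℕ} (ha : a ≠ 0) (hb : b ≠ 0) :
    piExp π (a * b) = piExp π a + piExp π b := by
  simp only [piExp_eq_sum, Nat.factorization_mul ha hb, Finsupp.add_apply,
    Finset.sum_add_distrib]

lemma piExp_le_of_dvd (π : Finset ℕ) {a b : ℕ} (h : a ∣ b) (hb : b ≠ 0) :
    piExp π a ≤ piExp π b := by
  obtain ⟨c, rfl⟩ := h
  rw [piExp_mul π (left_ne_zero_of_mul hb) (right_ne_zero_of_mul hb)]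
  exact Nat.le_add_right _ _

lemma IsPiNumber.one_le_piExp {π : Finset ℕ} {n : ℕ} (hn : IsPiNumber π n) (h0 : n ≠ 0)
    (h1 : n ≠ 1) : 1 ≤ piExp π n := by
  obtain ⟨p, hp, hpn⟩ := Nat.exists_prime_and_dvd h1
  rw [piExp_eq_sum]
  calc 1 ≤ n.factorization p := hp.factorization_pos_of_dvd h0 hpn
    _ ≤ ∑ q ∈ π, n.factorization q :=
      Finset.single_le_sum (fun _ _ => Nat.zero_le _) (hn p hp hpn)

lemma IsPiNumber.of_dvd {π : Finset ℕ} {a b : ℕ} (hb : IsPiNumber π b) (h : a ∣ b) :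
    IsPiNumber π a := fun p hp hpa => hb p hp (hpa.trans h)

lemma IsPiPrimeNumber.of_dvd {π : Finset ℕ} {a b : ℕ} (hb : IsPiPrimeNumber π b) (h : a ∣ b) :
    IsPiPrimeNumber π a := fun p hp hpa => hb p hp (hpa.trans h)

lemma IsPiNumber.mul {π : Finset ℕ} {a b : ℕ} (ha : IsPiNumber π a) (hb : IsPiNumber π b) :
    IsPiNumber π (a * b) := fun p hp hpab =>
  (hp.dvd_mul.mp hpab).elim (ha p hp) (hb p hp)

lemma IsPiNumber.coprime {π : Finset ℕ} {a b : ℕ} (ha : IsPiNumber π a)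
    (hb : IsPiPrimeNumber π b) : a.Coprime b :=
  Nat.coprime_of_dvd fun p hp hpa hpb => hb p hp hpb (ha p hp hpa)

namespace Subgroup

variable {G : Type*} [Group G]

theorem relIndex_dvd_relIndex_of_normal {H A K : Subgroup G} [H.Normal] (hAK : A ≤ K) :
    H.relIndex A ∣ H.relIndex K := by
  rw [← relIndex_subgroupOf hAK]
  exact relIndex_dvd_index_of_normal _ _

theorem relIndex_sup_dvd_relIndex {H K A Z : Subgroup G} [H.Normal] [Z.Normal] (hAK : A ≤ K)
    (hHA : H ⊓ A ≤ Z) : Z.relIndex (A ⊔ Z) ∣ H.relIndex K := by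
  rw [relIndex_sup_right]
  calc Z.relIndex A ∣ (H ⊓ A).relIndex A := relIndex_dvd_of_le_left A hHA
    _ = H.relIndex A := inf_relIndex_right H A
    _ ∣ H.relIndex K := relIndex_dvd_relIndex_of_normal hAK

/-- Second isomorphism theorem, at the level of indices. -/
theorem relIndex_sup_of_normal (H : Subgroup G) {N : Subgroup G} [N.Normal]
    (hN : N.relIndex H ≠ 0) : H.relIndex (H ⊔ N) = H.relIndex N := by
  have h₁ := relIndex_inf_mul_relIndex H N (H ⊔ N)
  have h₂ := relIndex_inf_mul_relIndex N H (H ⊔ N)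
  rw [inf_eq_left.mpr le_sup_right, relIndex_sup_right, mul_comm] at h₁
  rw [inf_eq_left.mpr le_sup_left, inf_comm] at h₂
  exact Nat.eq_of_mul_eq_mul_left (Nat.pos_of_ne_zero hN) (h₂.trans h₁.symm)

theorem index_centralizer_mk_dvd (N : Subgroup G) [N.Normal] (x : G) :
    (centralizer {(x : G ⧸ N)}).index ∣ (centralizer {x} ⊔ N).index := by
  have hmap : (centralizer {x}).map (QuotientGroup.mk' N) ≤ centralizer {(x : G ⧸ N)} := by
    simpa using map_centralizer_le_centralizer_image {x} (QuotientGroup.mk' N)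
  have hidx :
      ((centralizer {x}).map (QuotientGroup.mk' N)).index = (centralizer {x} ⊔ N).index := by
    rw [index_map, QuotientGroup.ker_mk',
      MonoidHom.range_eq_top.mpr (QuotientGroup.mk'_surjective N), index_top, mul_one]
  exact hidx ▸ index_dvd_of_le hmap

/-- The right factor of a complement to a central subgroup `Z` contains every element whose
order is prime to `|Z|`: writing `g = z * q`, the factors commute, so `g ^ |Z| = q ^ |Z|`. -/
theorem IsComplement'.mem_right_of_coprime_orderOf {Z Q : Subgroup G} (h : IsComplement' Z Q)
    (hZ : Z ≤ center G) {g : G} (hg : (Nat.card Z).Coprime (orderOf g)) : g ∈ Q := by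
  obtain ⟨⟨z, q⟩, hzq, -⟩ := h.existsUnique g
  have hcomm : Commute (z : G) q := ((mem_center_iff.mp (hZ z.2)) q).symm
  have hpow : g ^ Nat.card Z ∈ Q := by
    rw [← hzq, hcomm.mul_pow, orderOf_dvd_iff_pow_eq_one.mp (Subgroup.orderOf_dvd_natCard Z z.2),
      one_mul]
    exact pow_mem q.2 _
  obtain ⟨k, hk⟩ := exists_pow_eq_self_of_coprime hg
  exact hk ▸ pow_mem hpow k

/-- A normal subgroup `D` that centralizes a subgroup `Z ≤ D` of order prime to `|D : Z|`
splits as `Z × Q`, and `Q`, being the set of elements of `D` of order prime to `|Z|`,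
is normal in `G`. -/
theorem exists_normal_card_eq_relIndex_of_le_centralizer {Z D : Subgroup G} [D.Normal]
    (hZD : Z ≤ D) (hDZ : D ≤ centralizer Z) (hcop : (Nat.card Z).Coprime (Z.relIndex D)) :
    ∃ Q : Subgroup G, Q.Normal ∧ Nat.card Q = Z.relIndex D := by
  have hcentral : Z.subgroupOf D ≤ center D := fun z hz =>
    mem_center_iff.mpr fun d => Subtype.ext (hDZ d.2 z hz).symm
  have : (Z.subgroupOf D).Normal :=
    ⟨fun z hz d => by rwa [(mem_center_iff.mp (hcentral hz) d), mul_inv_cancel_right]⟩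
  have hcard : Nat.card (Z.subgroupOf D) = Nat.card Z :=
    Nat.card_congr (subgroupOfEquivOfLe hZD).toEquiv
  obtain ⟨Q, hQ⟩ := exists_right_complement'_of_coprime (hcard ▸ hcop)
  refine ⟨Q.map D.subtype, ⟨?_⟩, (card_subtype D Q).trans hQ.symm.index_eq_card.symm⟩
  rintro - ⟨q, hq, rfl⟩ g
  have hconj : g * q * g⁻¹ ∈ D := ‹D.Normal›.conj_mem q q.2 g
  refine ⟨⟨_, hconj⟩, hQ.mem_right_of_coprime_orderOf hcentral ?_, rfl⟩
  have horder : orderOf (⟨_, hconj⟩ : D) = orderOf q := by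
    rw [orderOf_mk, ← orderOf_coe]
    exact (SemiconjBy.orderOf_eq g (by simp [SemiconjBy])).symm
  rw [hcard, horder]
  refine hcop.coprime_dvd_right ?_
  rw [relIndex, hQ.symm.index_eq_card]
  exact Q.orderOf_dvd_natCard hq

end Subgroup

open Subgroup

theorem le_of_isPiPrimeNumber_relIndex {π : Finset ℕ} {G : Type*} [Group G]
    (hOpi' : ∀ K : Subgroup G, K.Normal → IsPiPrimeNumber π (Nat.card K) → K = ⊥)
    {Z D : Subgroup G} [D.Normal] (hZD : Z ≤ D) (hDZ : D ≤ centralizer Z)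
    (hZ : IsPiNumber π (Nat.card Z)) (hD : IsPiPrimeNumber π (Z.relIndex D)) : D ≤ Z := by
  obtain ⟨Q, hQ, hQcard⟩ :=
    exists_normal_card_eq_relIndex_of_le_centralizer hZD hDZ (hZ.coprime hD)
  rw [← relIndex_eq_one, ← hQcard, hOpi' Q hQ (hQcard ▸ hD), card_bot]

/-- The Hall–Higman lemma. By induction along the series, `H i ∩ C_G(P)` lies in
`Z = C_G(P) ∩ P`: each step adds to `Z` a normal subgroup centralizing `Z` whose index
over `Z` divides a `π`- or `π'`-factor of the series, and both cases collapse onto `Z`. -/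
theorem PiSeparable.centralizer_le {π : Finset ℕ} {G : Type*} [Group G]
    (hsep : PiSeparable π G)
    (hOpi' : ∀ K : Subgroup G, K.Normal → IsPiPrimeNumber π (Nat.card K) → K = ⊥)
    (P : Subgroup G) [P.Normal] (hPpi : IsPiNumber π (Nat.card P))
    (hPmax : ∀ K : Subgroup G, K.Normal → IsPiNumber π (Nat.card K) → K ≤ P) :
    centralizer (P : Set G) ≤ P := by
  obtain ⟨n, H, h0, hn, hmono, hnorm, hfac⟩ := hsep
  set C := centralizer (P : Set G)
  set Z := C ⊓ P
  have hZpi : IsPiNumber π (Nat.card Z) := hPpi.of_dvd (card_dvd_of_le inf_le_right)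
  suffices ∀ i ≤ n, H i ⊓ C ≤ P by simpa [hn] using this n le_rfl
  intro i hi
  induction i with
  | zero => simp [h0]
  | succ i ih =>
    have := hnorm i
    set D := H (i + 1) ⊓ C ⊔ Z
    have hZD : Z ≤ D := le_sup_right
    have hDC : D ≤ C := sup_le inf_le_right inf_le_left
    have hdvd : Z.relIndex D ∣ (H i).relIndex (H (i + 1)) :=
      relIndex_sup_dvd_relIndex inf_le_left
        (le_inf (inf_le_right.trans inf_le_right)
          ((inf_le_inf_left _ inf_le_right).trans (ih (by omega))))
    have hDZ : D ≤ Z := by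
      rcases hfac i (by omega) with hπ | hπ'
      · refine le_inf hDC (hPmax D inferInstance ?_)
        rw [← relIndex_bot_left, ← relIndex_mul_relIndex ⊥ Z D bot_le hZD,
          relIndex_bot_left]
        exact hZpi.mul (hπ.of_dvd hdvd)
      · exact le_of_isPiPrimeNumber_relIndex hOpi' hZD
          (hDC.trans (Subgroup.centralizer_le inf_le_right)) hZpi (hπ'.of_dvd hdvd)
    exact le_sup_left.trans (hDZ.trans inf_le_right)

theorem piExp_index_centralizer_mk_lt {π : Finset ℕ} {G : Type*} [Group G] [Finite G]
    {P : Subgroup G} [P.Normal] (hPpi : IsPiNumber π (Nat.card P))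
    (hCP : centralizer (P : Set G) ≤ P) {x : G} (hx : x ∉ P) :
    piExp π (centralizer {(x : G ⧸ P)}).index < piExp π (centralizer {x}).index := by
  set C := centralizer {x}
  have hPC : ¬ P ≤ C := fun h =>
    hx (hCP fun p hp => mem_centralizer_singleton_iff.mp (h hp))
  have hCP0 : C.relIndex P ≠ 0 := fun h =>
    index_ne_zero_of_finite (index_eq_zero_of_relIndex_eq_zero h)
  have hPC0 : P.relIndex C ≠ 0 := fun h =>
    index_ne_zero_of_finite (index_eq_zero_of_relIndex_eq_zero h)
  have hidx : C.index = C.relIndex P * (C ⊔ P).index := by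
    rw [← relIndex_sup_of_normal C hPC0, relIndex_mul_index le_sup_left]
  have hrel : 1 ≤ piExp π (C.relIndex P) :=
    (hPpi.of_dvd (relIndex_dvd_card C P)).one_le_piExp hCP0 (fun h => hPC (relIndex_eq_one.mp h))
  have hquot : piExp π (centralizer {(x : G ⧸ P)}).index ≤ piExp π (C ⊔ P).index :=
    piExp_le_of_dvd π (index_centralizer_mk_dvd P x) index_ne_zero_of_finite
  rw [hidx, piExp_mul π hCP0 index_ne_zero_of_finite]
  omega

theorem piExp_index_centralizer_le_epsPi (π : Finset ℕ) {G : Type*} [Group G] [Finite G]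
    (x : G) : piExp π (centralizer {x}).index ≤ epsPi π G :=
  le_csSup (Set.finite_range _).bddAbove ⟨x, rfl⟩

theorem exists_piExp_index_centralizer_eq_epsPi (π : Finset ℕ) (G : Type*) [Group G]
    [Finite G] :
    ∃ x : G, piExp π (centralizer {x}).index = epsPi π G :=
  Nat.sSup_mem (Set.range_nonempty _) (Set.finite_range _).bddAbove

theorem epsPi_quotient_Opi_add_one_le {G : Type*} [Group G] [Finite G]
    (π : Finset ℕ) (hsep : PiSeparable π G)
    (hOpi' : ∀ K : Subgroup G, K.Normal → IsPiPrimeNumber π (Nat.card K) → K = ⊥)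
    (P : Subgroup G) [P.Normal] (hPpi : IsPiNumber π (Nat.card P))
    (hPmax : ∀ K : Subgroup G, K.Normal → IsPiNumber π (Nat.card K) → K ≤ P)
    (hPne : P ≠ ⊤) :
    epsPi π (G ⧸ P) + 1 ≤ epsPi π G := by
  have hCP := hsep.centralizer_le hOpi' P hPpi hPmax
  obtain ⟨y, hy⟩ : ∃ y, y ∉ P := by
    by_contra! h
    exact hPne (P.eq_top_iff'.mpr h)
  obtain ⟨x, hx⟩ := exists_piExp_index_centralizer_eq_epsPi π (G ⧸ P)
  obtain ⟨x, rfl⟩ := QuotientGroup.mk_surjective x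
  obtain ⟨z, hz, hle⟩ :
      ∃ z ∉ P, epsPi π (G ⧸ P) ≤ piExp π (centralizer {(z : G ⧸ P)}).index := by
    by_cases hxP : x ∈ P
    · refine ⟨y, hy, ?_⟩
      rw [← hx, (QuotientGroup.eq_one_iff x).mpr hxP,
        index_eq_one.mpr (centralizer_eq_top_iff_subset.mpr (by simp))]
      simp [piExp]
    · exact ⟨x, hxP, hx.ge⟩
  calc epsPi π (G ⧸ P) + 1 ≤ piExp π (centralizer {(z : G ⧸ P)}).index + 1 := by omega
    _ ≤ piExp π (centralizer {z}).index := piExp_index_centralizer_mk_lt hPpi hCP hz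
    _ ≤ epsPi π G := piExp_index_centralizer_le_epsPi π z
end
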